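/- arXiv:2311.01983 — 5 statements merged into one kernel-verified Lean document; each statement's English description precedes it below -/
import Mathlib

section
/- Assume a_2·n_2 = a_21·n_1 + a_23·n_3, a_3·n_3 = a_32·n_2 + a_34·n_4, and a_42·n_2 + a_13·n_3 = a_21·n_1 + a_34·n_4 (i.e., f_2, f_3, f_5 ∈ I(C)). Then for every integer i with 0 ≤ i ≤ d − 2, the binomial g_i = x_2^{a_2−(i+1)a_32} x_3^{i·a_3+a_13} − x_1^{a_21} x_4^{(i+1)a_34} belongs to I(C); in particular all exponents appearing in g_i are nonnegative and g_0 = f_5. -/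
set_option maxHeartbeats 1000000


noncomputable section

open MvPolynomial

/-- The toric ideal `I(C)` of the monomial curve parametrized by
`x_i = t^{n_i}`: the kernel of the `K`-algebra map `K[x_1,…,x_4] → K[t]`,
`x_i ↦ t^{n_i}`. -/
def toricIdeal (K : Type*) [Field K] (n : Fin 4 → ℕ) : Ideal (MvPolynomial (Fin 4) K) :=
  RingHom.ker
    (MvPolynomial.aeval (fun i => (Polynomial.X : Polynomial K) ^ n i) :
      MvPolynomial (Fin 4) K →ₐ[K] Polynomial K)

/-- `f_*`: the homogeneous component of `f` of least total degree. -/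
def star {K : Type*} [Field K] {σ : Type*} (f : MvPolynomial σ K) : MvPolynomial σ K :=
  MvPolynomial.homogeneousComponent
    (sInf {m : ℕ | MvPolynomial.homogeneousComponent m f ≠ 0}) f

/-- `I_*`: the ideal generated by the least-degree homogeneous components `f_*`
of the nonzero elements `f ∈ I`. -/
def idealStar {K : Type*} [Field K] {σ : Type*} (I : Ideal (MvPolynomial σ K)) :
    Ideal (MvPolynomial σ K) :=
  Ideal.span {g | ∃ f ∈ I, f ≠ 0 ∧ g = star f}

/-- The depth of a local ring: the supremum of the lengths of regular sequences
consisting of elements of the maximal ideal. -/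
def ringDepth (R : Type*) [CommRing R] [IsLocalRing R] : ℕ∞ :=
  sSup {m : ℕ∞ | ∃ rs : List R, (rs.length : ℕ∞) = m ∧
    (∀ r ∈ rs, r ∈ IsLocalRing.maximalIdeal R) ∧ RingTheory.Sequence.IsRegular R rs}

/-- A commutative ring is Cohen-Macaulay if its localization at every maximal ideal
has depth equal to Krull dimension. -/
def IsCohenMacaulayRing (R : Type*) [CommRing R] : Prop :=
  ∀ (P : Ideal R) (hP : P.IsMaximal),
    letI := hP.isPrime
    (ringDepth (Localization.AtPrime P) : WithBot ℕ∞) = ringKrullDim (Localization.AtPrime P)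

/-- The minimal number of generators of an ideal. -/
def mu {R : Type*} [CommRing R] (I : Ideal R) : ℕ :=
  sInf {m : ℕ | ∃ s : Finset R, s.card = m ∧ Ideal.span (s : Set R) = I}


/-- if `f_2, f_3, f_5 ∈ I(C)`, then for every `0 ≤ i ≤ d − 2` the binomial
`g_i = x_2^{a_2−(i+1)a_32} x_3^{i a_3 + a_13} − x_1^{a_21} x_4^{(i+1)a_34}` belongs to `I(C)`;
in particular its exponents are nonnegative (i.e. `(i+1)a_32 ≤ a_2`), and `g_0 = f_5`. -/
theorem stmt_2 {K : Type*} [Field K] (n : Fin 4 → ℕ)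
    (hpos : ∀ i, 0 < n i) (hinj : Function.Injective n)
    (hgcd : Nat.gcd (Nat.gcd (Nat.gcd (n 0) (n 1)) (n 2)) (n 3) = 1)
    (a21 a23 a32 a34 a42 a13 a14 : ℕ)
    (h21 : 0 < a21) (h23 : 0 < a23) (h32 : 0 < a32) (h34 : 0 < a34)
    (h42 : 0 < a42) (h13 : 0 < a13) (h14 : 0 < a14)
    (a2 a3 a4 : ℕ)
    (ha2 : a2 = a32 + a42) (ha3 : a3 = a13 + a23) (ha4 : a4 = a14 + a34)
    (d : ℕ) (hd : d = sInf ({i : ℕ | a2 ≤ i * a32} ∪ {i : ℕ | a4 ≤ i * a34}))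
    (hf2 : a2 * n 1 = a21 * n 0 + a23 * n 2)
    (hf3 : a3 * n 2 = a32 * n 1 + a34 * n 3)
    (hf5 : a42 * n 1 + a13 * n 2 = a21 * n 0 + a34 * n 3)
    (g : ℕ → MvPolynomial (Fin 4) K)
    (hg : ∀ i, g i = X 1 ^ (a2 - (i + 1) * a32) * X 2 ^ (i * a3 + a13)
      - X 0 ^ a21 * X 3 ^ ((i + 1) * a34)) :
    (∀ i : ℕ, i ≤ d - 2 → (i + 1) * a32 ≤ a2 ∧ g i ∈ toricIdeal K n) ∧
    g 0 = X 1 ^ a42 * X 2 ^ a13 - X 0 ^ a21 * X 3 ^ a34 := by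
  constructor
  · intro i hi
    -- exponent bound
    have hle : (i + 1) * a32 ≤ a2 := by
      by_cases h : i + 1 < d
      · have hnot : i + 1 ∉ ({j : ℕ | a2 ≤ j * a32} ∪ {j : ℕ | a4 ≤ j * a34}) := by
          apply Nat.notMem_of_lt_sInf
          rw [← hd]; exact h
        have : ¬ a2 ≤ (i + 1) * a32 := fun hc => hnot (Or.inl hc)
        omega
      · have hi0 : i = 0 := by omega
        subst hi0
        rw [ha2]; omega
    refine ⟨hle, ?_⟩
    -- the key exponent identity
    obtain ⟨k, hk⟩ : ∃ k, a42 = i * a32 + k := by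
      refine ⟨a42 - i * a32, ?_⟩
      have : (i + 1) * a32 = i * a32 + a32 := by ring
      omega
    have hsub : a2 - (i + 1) * a32 = k := by
      have : (i + 1) * a32 = i * a32 + a32 := by ring
      omega
    have hE : n 1 * (a2 - (i + 1) * a32) + n 2 * (i * a3 + a13)
        = n 0 * a21 + n 3 * ((i + 1) * a34) := by
      rw [hsub]
      have h3 : (a3 * n 2 : ℤ) = a32 * n 1 + a34 * n 3 := by exact_mod_cast hf3
      have h5 : (a42 * n 1 + a13 * n 2 : ℤ) = a21 * n 0 + a34 * n 3 := by exact_mod_cast hf5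
      have hk' : (a42 : ℤ) = i * a32 + k := by exact_mod_cast hk
      have : (n 1 * k + n 2 * (i * a3 + a13) : ℤ)
          = n 0 * a21 + n 3 * ((i + 1) * a34) := by
        linear_combination (i : ℤ) * h3 + h5 - (n 1 : ℤ) * hk'
      exact_mod_cast this
    -- membership
    simp only [toricIdeal, RingHom.mem_ker, AlgHom.coe_toRingHom, hg, map_sub, map_mul,
      map_pow, aeval_X]
    rw [← pow_mul, ← pow_mul, ← pow_mul, ← pow_mul, ← pow_add, ← pow_add, hE, sub_self]
  · rw [hg 0]
    have h1 : a2 - (0 + 1) * a32 = a42 := by omega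
    have h2 : 0 * a3 + a13 = a13 := by omega
    have h3 : (0 + 1) * a34 = a34 := by omega
    rw [h1, h2, h3]

end
end

section
/- Assume a_1·n_1 = a_13·n_3 + a_14·n_4 and a_3·n_3 = a_32·n_2 + a_34·n_4 (i.e., f_1, f_3 ∈ I(C)). Then for every integer i with 0 ≤ i ≤ d − 2, the binomial h_i = x_3^{i·a_3+a_13} x_4^{a_4−(i+1)a_34} − x_1^{a_1} x_2^{i·a_32} belongs to I(C); in particular all exponents appearing in h_i are nonnegative and h_0 = f_1. -/
noncomputable section

open MvPolynomial

/-- if `f_1, f_3 ∈ I(C)`, then for every `0 ≤ i ≤ d − 2` the binomial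
`h_i = x_3^{i a_3 + a_13} x_4^{a_4−(i+1)a_34} − x_1^{a_1} x_2^{i a_32}` belongs to `I(C)`;
in particular its exponents are nonnegative (i.e. `(i+1)a_34 ≤ a_4`), and `h_0 = f_1`. -/
theorem stmt_3 {K : Type*} [Field K] (n : Fin 4 → ℕ)
    (hpos : ∀ i, 0 < n i) (hinj : Function.Injective n)
    (hgcd : Nat.gcd (Nat.gcd (Nat.gcd (n 0) (n 1)) (n 2)) (n 3) = 1)
    (a1 a23 a32 a34 a42 a13 a14 : ℕ)
    (h1 : 0 < a1) (h23 : 0 < a23) (h32 : 0 < a32) (h34 : 0 < a34)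
    (h42 : 0 < a42) (h13 : 0 < a13) (h14 : 0 < a14)
    (a2 a3 a4 : ℕ)
    (ha2 : a2 = a32 + a42) (ha3 : a3 = a13 + a23) (ha4 : a4 = a14 + a34)
    (d : ℕ) (hd : d = sInf ({i : ℕ | a2 ≤ i * a32} ∪ {i : ℕ | a4 ≤ i * a34}))
    (hf1 : a1 * n 0 = a13 * n 2 + a14 * n 3)
    (hf3 : a3 * n 2 = a32 * n 1 + a34 * n 3)
    (h : ℕ → MvPolynomial (Fin 4) K)
    (hh : ∀ i, h i = X 2 ^ (i * a3 + a13) * X 3 ^ (a4 - (i + 1) * a34)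
      - X 0 ^ a1 * X 1 ^ (i * a32)) :
    (∀ i : ℕ, i ≤ d - 2 → (i + 1) * a34 ≤ a4 ∧ h i ∈ toricIdeal K n) ∧
    h 0 = X 2 ^ a13 * X 3 ^ a14 - X 0 ^ a1 := by
  have hS : (a4 : ℕ) ∈ ({i : ℕ | a2 ≤ i * a32} ∪ {i : ℕ | a4 ≤ i * a34}) := by
    right
    simp only [Set.mem_setOf_eq]
    nlinarith
  have hd2 : 2 ≤ d := by
    rcases Nat.lt_or_ge d 2 with hlt | hge
    · exfalso
      have hmem : d ∈ ({i : ℕ | a2 ≤ i * a32} ∪ {i : ℕ | a4 ≤ i * a34}) := by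
        rw [hd]; exact Nat.sInf_mem ⟨a4, hS⟩
      interval_cases d <;>
        simp only [Set.mem_union, Set.mem_setOf_eq] at hmem <;> omega
    · exact hge
  constructor
  · intro i hi
    have hnot : (i + 1) ∉ ({j : ℕ | a2 ≤ j * a32} ∪ {j : ℕ | a4 ≤ j * a34}) := by
      apply Nat.notMem_of_lt_sInf
      rw [← hd]; omega
    simp only [Set.mem_union, Set.mem_setOf_eq, not_or, not_le] at hnot
    have hle : (i + 1) * a34 ≤ a4 := le_of_lt hnot.2
    refine ⟨hle, ?_⟩
    rw [hh i, toricIdeal, RingHom.mem_ker]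
    simp only [map_sub, map_mul, map_pow, aeval_X]
    rw [← pow_mul, ← pow_mul, ← pow_mul, ← pow_mul, ← pow_add, ← pow_add]
    rw [sub_eq_zero]
    congr 1
    have hf3' : (a3 : ℤ) * n 2 = a32 * n 1 + a34 * n 3 := by exact_mod_cast hf3
    have hf1' : (a1 : ℤ) * n 0 = a13 * n 2 + a14 * n 3 := by exact_mod_cast hf1
    have ha4' : (a4 : ℤ) = a14 + a34 := by exact_mod_cast ha4
    zify [hle]
    push_cast
    linear_combination (i : ℤ) * hf3' - hf1' + (n 3 : ℤ) * ha4'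
  · rw [hh 0]
    have e1 : 0 * a3 + a13 = a13 := by omega
    have e2 : a4 - (0 + 1) * a34 = a14 := by omega
    have e3 : 0 * a32 = 0 := by omega
    rw [e1, e2, e3, pow_zero, mul_one]

end
end

section
/- Assume a_1·n_1 = a_13·n_3 + a_14·n_4, a_2·n_2 = a_21·n_1 + a_23·n_3, a_3·n_3 = a_32·n_2 + a_34·n_4, and a_4·n_4 = a_41·n_1 + a_42·n_2 (i.e., f_1, f_2, f_3, f_4 ∈ I(C)). Then the binomial p belongs to I(C), where p = x_3^{(d−1)a_3+a_13} − x_1^{a_21} x_2^{d·a_32−a_2} x_4^{d·a_34} if a_4 − d·a_34 > 0 (in which case a_2 − d·a_32 ≤ 0), and p = x_3^{(d−1)a_3+a_13} − x_1^{a_1} x_2^{(d−1)a_32} x_4^{d·a_34−a_4} if a_4 − d·a_34 ≤ 0. -/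
noncomputable section

open MvPolynomial

/-- if `f_1, f_2, f_3, f_4 ∈ I(C)`, then the binomial `p` belongs to `I(C)`,
where `p = x_3^{(d−1)a_3+a_13} − x_1^{a_21} x_2^{d a_32 − a_2} x_4^{d a_34}` if
`a_4 − d a_34 > 0` (in which case `a_2 − d a_32 ≤ 0`), and
`p = x_3^{(d−1)a_3+a_13} − x_1^{a_1} x_2^{(d−1)a_32} x_4^{d a_34 − a_4}` if
`a_4 − d a_34 ≤ 0`. -/
theorem stmt_4 {K : Type*} [Field K] (n : Fin 4 → ℕ)
    (hpos : ∀ i, 0 < n i) (hinj : Function.Injective n)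
    (hgcd : Nat.gcd (Nat.gcd (Nat.gcd (n 0) (n 1)) (n 2)) (n 3) = 1)
    (a21 a23 a32 a34 a41 a42 a13 a14 : ℕ)
    (h21 : 0 < a21) (h23 : 0 < a23) (h32 : 0 < a32) (h34 : 0 < a34)
    (h41 : 0 < a41) (h42 : 0 < a42) (h13 : 0 < a13) (h14 : 0 < a14)
    (a1 a2 a3 a4 : ℕ)
    (ha1 : a1 = a21 + a41) (ha2 : a2 = a32 + a42)
    (ha3 : a3 = a13 + a23) (ha4 : a4 = a14 + a34)
    (d : ℕ) (hd : d = sInf ({i : ℕ | a2 ≤ i * a32} ∪ {i : ℕ | a4 ≤ i * a34}))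
    (hf1 : a1 * n 0 = a13 * n 2 + a14 * n 3)
    (hf2 : a2 * n 1 = a21 * n 0 + a23 * n 2)
    (hf3 : a3 * n 2 = a32 * n 1 + a34 * n 3)
    (hf4 : a4 * n 3 = a41 * n 0 + a42 * n 1) :
    (d * a34 < a4 → a2 ≤ d * a32 ∧
      (X 2 ^ ((d - 1) * a3 + a13)
        - X 0 ^ a21 * X 1 ^ (d * a32 - a2) * X 3 ^ (d * a34) : MvPolynomial (Fin 4) K)
        ∈ toricIdeal K n) ∧
    (a4 ≤ d * a34 →
      (X 2 ^ ((d - 1) * a3 + a13)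
        - X 0 ^ a1 * X 1 ^ ((d - 1) * a32) * X 3 ^ (d * a34 - a4) : MvPolynomial (Fin 4) K)
        ∈ toricIdeal K n) := by
  have key : ∀ e b c g : ℕ, e * n 2 = b * n 0 + c * n 1 + g * n 3 →
      (X 2 ^ e - X 0 ^ b * X 1 ^ c * X 3 ^ g : MvPolynomial (Fin 4) K) ∈ toricIdeal K n := by
    intro e b c g h
    rw [toricIdeal, RingHom.mem_ker]
    simp only [map_sub, map_mul, map_pow, aeval_X, ← pow_mul, ← pow_add]
    rw [sub_eq_zero]
    congr 1
    rw [mul_comm]; rw [h]; ring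
  -- basic facts about d
  have hSne : ({i : ℕ | a2 ≤ i * a32} ∪ {i : ℕ | a4 ≤ i * a34}).Nonempty :=
    ⟨a2, Or.inl (Nat.le_mul_of_pos_right a2 h32)⟩
  have hdmem : d ∈ ({i : ℕ | a2 ≤ i * a32} ∪ {i : ℕ | a4 ≤ i * a34}) := by
    rw [hd]; exact Nat.sInf_mem hSne
  have hd1 : 1 ≤ d := by
    rcases Nat.eq_zero_or_pos d with h0 | h
    · rw [h0] at hdmem
      simp only [Set.mem_union, Set.mem_setOf_eq, Nat.zero_mul] at hdmem
      omega
    · exact h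
  -- integer casts of the defining relations
  have hf1' : (a1 : ℤ) * n 0 = a13 * n 2 + a14 * n 3 := by exact_mod_cast hf1
  have hf2' : (a2 : ℤ) * n 1 = a21 * n 0 + a23 * n 2 := by exact_mod_cast hf2
  have hf3' : (a3 : ℤ) * n 2 = a32 * n 1 + a34 * n 3 := by exact_mod_cast hf3
  have ha3' : (a3 : ℤ) = a13 + a23 := by exact_mod_cast ha3
  have ha4' : (a4 : ℤ) = a14 + a34 := by exact_mod_cast ha4
  constructor
  · intro hlt
    have hle : a2 ≤ d * a32 := by
      rcases hdmem with h | h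
      · exact h
      · simp only [Set.mem_setOf_eq] at h; omega
    refine ⟨hle, key _ _ _ _ ?_⟩
    zify [hd1, hle]
    linear_combination (d : ℤ) * hf3' + hf2' - ((n 2 : ℤ)) * ha3'
  · intro hle
    refine key _ _ _ _ ?_
    zify [hd1, hle]
    linear_combination ((d : ℤ) - 1) * hf3' - hf1' + ((n 3 : ℤ)) * ha4'

end
end

section
/- Let c ≥ 2 be an integer such that 227 does not divide c + 80. Then gcd(6c² + 9c + 2, 6c² + 6c − 11) = 1; consequently, setting n_1 = 3c² − 4c + 2, n_2 = 6c² + 9c + 2, n_3 = 4c² + 5c − 3, n_4 = 6c² + 6c − 11, one has gcd(n_1, n_2, n_3, n_4) = 1. -/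
/-- For an integer `c ≥ 2` such that `227` does not divide `c + 80`,
one has `gcd(6c² + 9c + 2, 6c² + 6c − 11) = 1`; consequently, with
`n_1 = 3c² − 4c + 2`, `n_2 = 6c² + 9c + 2`, `n_3 = 4c² + 5c − 3`, `n_4 = 6c² + 6c − 11`,
`gcd(n_1, n_2, n_3, n_4) = 1`. -/
theorem stmt_12 (c : ℕ) (hc : 2 ≤ c) (h227 : ¬ (227 ∣ c + 80)) :
    Nat.gcd (6 * c ^ 2 + 9 * c + 2) (6 * c ^ 2 + 6 * c - 11) = 1 ∧
    Nat.gcd (Nat.gcd (Nat.gcd (3 * c ^ 2 - 4 * c + 2) (6 * c ^ 2 + 9 * c + 2))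
      (4 * c ^ 2 + 5 * c - 3)) (6 * c ^ 2 + 6 * c - 11) = 1 := by
  have hc2 : 4 ≤ c ^ 2 := by nlinarith
  have key : Nat.gcd (6 * c ^ 2 + 9 * c + 2) (6 * c ^ 2 + 6 * c - 11) = 1 := by
    set d := Nat.gcd (6 * c ^ 2 + 9 * c + 2) (6 * c ^ 2 + 6 * c - 11) with hd
    have ha : d ∣ 6 * c ^ 2 + 9 * c + 2 := Nat.gcd_dvd_left _ _
    have hb : d ∣ 6 * c ^ 2 + 6 * c - 11 := Nat.gcd_dvd_right _ _
    have h1 : d ∣ 3 * c + 13 := by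
      have := Nat.dvd_sub ha hb
      have heq : 6 * c ^ 2 + 9 * c + 2 - (6 * c ^ 2 + 6 * c - 11) = 3 * c + 13 := by
        omega
      rwa [heq] at this
    have h2 : d ∣ 17 * c - 2 := by
      have := Nat.dvd_sub (h1.mul_left (2 * c)) ha
      have heq : 2 * c * (3 * c + 13) - (6 * c ^ 2 + 9 * c + 2) = 17 * c - 2 := by
        ring_nf; omega
      rwa [heq] at this
    have h3 : d ∣ 227 := by
      have := Nat.dvd_sub (h1.mul_left 17) (h2.mul_left 3)
      have heq : 17 * (3 * c + 13) - 3 * (17 * c - 2) = 227 := by omega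
      rwa [heq] at this
    have hp : Nat.Prime 227 := by norm_num
    rcases (Nat.dvd_prime hp).mp h3 with h | h
    · exact h
    · exfalso
      apply h227
      have h13 : (227 : ℕ) ∣ 3 * c + 13 := h ▸ h1
      have : (227 : ℕ) ∣ 76 * (3 * c + 13) := h13.mul_left 76
      have heq : 76 * (3 * c + 13) = (c + 80) + 227 * (c + 4) := by ring
      rw [heq] at this
      exact (Nat.dvd_add_right (Dvd.intro _ rfl)).mp (by rwa [Nat.add_comm] at this)
  refine ⟨key, ?_⟩
  have hdvd2 : Nat.gcd (Nat.gcd (Nat.gcd (3 * c ^ 2 - 4 * c + 2) (6 * c ^ 2 + 9 * c + 2))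
      (4 * c ^ 2 + 5 * c - 3)) (6 * c ^ 2 + 6 * c - 11) ∣ 6 * c ^ 2 + 9 * c + 2 :=
    ((Nat.gcd_dvd_left _ _).trans (Nat.gcd_dvd_left _ _)).trans (Nat.gcd_dvd_right _ _)
  have hdvd4 := Nat.gcd_dvd_right (Nat.gcd (Nat.gcd (3 * c ^ 2 - 4 * c + 2)
      (6 * c ^ 2 + 9 * c + 2)) (4 * c ^ 2 + 5 * c - 3)) (6 * c ^ 2 + 6 * c - 11)
  have := Nat.dvd_gcd hdvd2 hdvd4
  rw [key] at this
  exact Nat.eq_one_of_dvd_one this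
end

section
/- Let c ≥ 2 be an integer such that 227 does not divide c + 80, and set n_1 = 3c² − 4c + 2, n_2 = 6c² + 9c + 2, n_3 = 4c² + 5c − 3, n_4 = 6c² + 6c − 11. Then the ideal I(C)_* is minimally generated by the set {x_2^c, x_2 x_4, x_4^c − x_1 x_2^{c−1}} ∪ {x_2^{c−(i+1)} x_3^{3i+1} : 0 ≤ i ≤ c−2} ∪ {x_3^{3i+1} x_4^{c−(i+1)} : 0 ≤ i ≤ c−2} ∪ {x_3^{3c−2}}, which has exactly 2c + 2 elements. -/
noncomputable section

open MvPolynomial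

/-!
Every `f ∈ I(C)` splits into parts of constant weight `∑ nᵢ aᵢ`, each with coefficient sum zero.
Hence the lowest-degree part `f_*` is a combination of monomials `x^a` having a partner `x^b` of the
same weight and larger degree, and of binomials `x^a - x^b` of the same weight and degree; so it
suffices that these lie in the span of `S`. Because `227 ∤ c + 80` makes `n₁` and `n₄` coprime,
the exponent differences of three binomials of `I(C)` form a basis of the lattice of weight-zero
vectors. Writing `b - a` in this basis, nonnegativity of `b` forces
`x^a - x^b = ± x₁^k (x₄^c - x₁ x₂^(c-1))` unless `x^a` is a multiple of a monomial of `S` or of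
the form `x₁^k x₄^l` with `l > c`. Minimality: the exponents of the monomials of `S` form an
antichain, neither term of the binomial divides a monomial of `S`, and no monomial of `S`
divides `x₄^c`.
-/

section

open Finsupp (single weight)

variable {σ K : Type*} [Field K]

lemma aeval_X_pow_monomial (n : σ → ℕ) (u : σ →₀ ℕ) (r : K) :
    aeval (fun i => (Polynomial.X : Polynomial K) ^ n i) (monomial u r) =
      Polynomial.C r * Polynomial.X ^ weight n u := by
  rw [aeval_monomial, Finsupp.weight_apply, Finsupp.sum, Finsupp.prod,
    ← Finset.prod_pow_eq_pow_sum, Polynomial.algebraMap_eq]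
  simp only [← pow_mul, smul_eq_mul, mul_comm]

lemma aeval_X_pow_monomial_sub_monomial {n : σ → ℕ} {a b : σ →₀ ℕ}
    (h : weight n a = weight n b) :
    aeval (fun i => (Polynomial.X : Polynomial K) ^ n i)
      (monomial a (1 : K) - monomial b 1) = 0 := by
  rw [map_sub, aeval_X_pow_monomial, aeval_X_pow_monomial, h, sub_self]

lemma sum_coeff_eq_zero_of_aeval_X_pow_eq_zero {n : σ → ℕ} {f : MvPolynomial σ K}
    (hf : aeval (fun i => (Polynomial.X : Polynomial K) ^ n i) f = 0) (v : ℕ) :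
    ∑ u ∈ f.support with weight n u = v, coeff u f = 0 := by
  have h := congrArg (Polynomial.coeff · v) hf
  rw [f.as_sum, map_sum] at h
  simpa [aeval_X_pow_monomial, Polynomial.coeff_C_mul, Polynomial.coeff_X_pow,
    Finset.sum_filter, eq_comm] using h

lemma star_eq_homogeneousComponent {f : MvPolynomial σ K} {d : ℕ}
    (hd : homogeneousComponent d f ≠ 0) (hlow : ∀ e < d, homogeneousComponent e f = 0) :
    star f = homogeneousComponent d f := by
  have : sInf {m | homogeneousComponent m f ≠ 0} = d :=
    le_antisymm (Nat.sInf_le hd) (le_csInf ⟨d, hd⟩ fun m hm => not_lt.1 fun h => hm (hlow m h))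
  rw [_root_.star, this]

lemma homogeneousComponent_monomial (m : ℕ) (u : σ →₀ ℕ) (r : K) :
    homogeneousComponent m (monomial u r) = if m = u.degree then monomial u r else 0 :=
  homogeneousComponent_of_mem (isHomogeneous_monomial r rfl)

lemma star_monomial_sub_monomial_of_degree_lt {a b : σ →₀ ℕ} (h : a.degree < b.degree) :
    _root_.star (monomial a (1 : K) - monomial b 1) = monomial a 1 := by
  have hcomp : homogeneousComponent a.degree (monomial a (1 : K) - monomial b 1) =
      monomial a 1 := by
    simp [homogeneousComponent_monomial, h.ne]
  rw [star_eq_homogeneousComponent (d := a.degree) (by rw [hcomp]; simp) fun e he => ?_, hcomp]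
  simp [homogeneousComponent_monomial, he.ne, (he.trans h).ne]

lemma star_monomial_sub_monomial_of_degree_eq {a b : σ →₀ ℕ} (hab : a ≠ b)
    (h : a.degree = b.degree) :
    _root_.star (monomial a (1 : K) - monomial b 1) = monomial a 1 - monomial b 1 := by
  have hcomp : homogeneousComponent a.degree (monomial a (1 : K) - monomial b 1) =
      monomial a 1 - monomial b 1 := by
    simp [homogeneousComponent_monomial, h]
  rw [star_eq_homogeneousComponent ?_ fun e he => ?_, hcomp]
  · rw [hcomp, sub_ne_zero]
    exact fun h' => hab (monomial_left_injective one_ne_zero h')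
  · simp [homogeneousComponent_monomial, he.ne, h ▸ he.ne]

lemma sum_monomial_mem_of_sum_eq_zero {R : Type*} [CommRing R] {I : Ideal (MvPolynomial σ R)}
    {s : Finset (σ →₀ ℕ)} {r : (σ →₀ ℕ) → R} (u₀ : σ →₀ ℕ) (hr : ∑ u ∈ s, r u = 0)
    (hI : ∀ u ∈ s, monomial u 1 - monomial u₀ 1 ∈ I) :
    ∑ u ∈ s, monomial u (r u) ∈ I := by
  have : ∑ u ∈ s, monomial u (r u) = ∑ u ∈ s, C (r u) * (monomial u 1 - monomial u₀ 1) := by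
    simp only [mul_sub, Finset.sum_sub_distrib, ← map_sum, hr, map_zero,
      sub_zero, C_mul_monomial, mul_one]
  rw [this]
  exact Ideal.sum_mem _ fun u hu => Ideal.mul_mem_left _ _ (hI u hu)

variable {n : σ → ℕ} {I : Ideal (MvPolynomial σ K)}

lemma homogeneousComponent_mem_of_forall_lt_eq_zero
    (hlt : ∀ a b : σ →₀ ℕ, weight n a = weight n b → a.degree < b.degree → monomial a 1 ∈ I)
    (heq : ∀ a b : σ →₀ ℕ, weight n a = weight n b → a.degree = b.degree →
      monomial a 1 - monomial b 1 ∈ I)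
    {f : MvPolynomial σ K} (hf : aeval (fun i => (Polynomial.X : Polynomial K) ^ n i) f = 0)
    {d : ℕ} (hlow : ∀ e < d, homogeneousComponent e f = 0) :
    homogeneousComponent d f ∈ I := by
  have hdeg : ∀ u ∈ f.support, d ≤ u.degree := fun u hu => not_lt.1 fun h => by
    simpa [coeff_homogeneousComponent, mem_support_iff.1 hu] using
      congrArg (coeff u) (hlow _ h)
  rw [homogeneousComponent_apply, ← Finset.sum_fiberwise_of_maps_to
    (g := weight n) fun u hu => Finset.mem_image_of_mem _ hu]
  refine Ideal.sum_mem _ fun v hv => ?_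
  obtain ⟨u₀, hu₀, rfl⟩ := Finset.mem_image.1 hv
  rw [Finset.mem_filter] at hu₀
  by_cases hhigh : ∃ b ∈ f.support, weight n b = weight n u₀ ∧ d < b.degree
  · obtain ⟨b, -, hb, hdb⟩ := hhigh
    refine Ideal.sum_mem _ fun u hu => ?_
    rw [Finset.mem_filter, Finset.mem_filter] at hu
    rw [← mul_one (coeff u f), ← C_mul_monomial]
    exact Ideal.mul_mem_left _ _ (hlt u b (hu.2.trans hb.symm) (hu.1.2 ▸ hdb))
  · push Not at hhigh
    have hfiber : {u ∈ {u ∈ f.support | u.degree = d} | weight n u = weight n u₀} =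
        {u ∈ f.support | weight n u = weight n u₀} := by
      rw [Finset.filter_filter]
      exact Finset.filter_congr fun u hu => ⟨fun h => h.2, fun h =>
        ⟨le_antisymm (hhigh u hu h) (hdeg u hu), h⟩⟩
    rw [hfiber]
    refine sum_monomial_mem_of_sum_eq_zero u₀ (sum_coeff_eq_zero_of_aeval_X_pow_eq_zero hf _)
      fun u hu => heq u u₀ (Finset.mem_filter.1 hu).2 ?_
    have hu := Finset.mem_filter.1 hu
    rw [hu₀.2]
    exact le_antisymm (hhigh u hu.1 hu.2) (hdeg u hu.1)

theorem idealStar_ker_aeval_X_pow_le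
    (hlt : ∀ a b : σ →₀ ℕ, weight n a = weight n b → a.degree < b.degree → monomial a 1 ∈ I)
    (heq : ∀ a b : σ →₀ ℕ, weight n a = weight n b → a.degree = b.degree →
      monomial a 1 - monomial b 1 ∈ I) :
    idealStar (RingHom.ker (aeval fun i => (Polynomial.X : Polynomial K) ^ n i :
      MvPolynomial σ K →ₐ[K] Polynomial K)) ≤ I := by
  refine Ideal.span_le.2 ?_
  rintro _ ⟨f, hf, -, rfl⟩
  exact homogeneousComponent_mem_of_forall_lt_eq_zero hlt heq hf fun e he =>
    of_not_not fun h => (Nat.sInf_le h).not_gt he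

end

namespace MonomialCurve

open Finsupp (single weight)

variable {K : Type*} [Field K] {c : ℕ}

def curveWeights (c : ℕ) : Fin 4 → ℕ :=
  ![3 * c ^ 2 - 4 * c + 2, 6 * c ^ 2 + 9 * c + 2, 4 * c ^ 2 + 5 * c - 3, 6 * c ^ 2 + 6 * c - 11]

def curveBinomial (K : Type*) [Field K] (c : ℕ) : MvPolynomial (Fin 4) K :=
  X 3 ^ c - X 0 * X 1 ^ (c - 1)

def coneExponents (c : ℕ) : Set (Fin 4 →₀ ℕ) :=
  {single 1 c, single 1 1 + single 3 1, single 2 (3 * c - 2)}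
    ∪ (fun i => single 1 (c - (i + 1)) + single 2 (3 * i + 1)) '' Set.Iic (c - 2)
    ∪ (fun i => single 2 (3 * i + 1) + single 3 (c - (i + 1))) '' Set.Iic (c - 2)

def coneGenerators (K : Type*) [Field K] (c : ℕ) : Set (MvPolynomial (Fin 4) K) :=
  insert (curveBinomial K c) ((fun m => monomial m 1) '' coneExponents c)

lemma coneGenerators_eq (K : Type*) [Field K] (c : ℕ) : coneGenerators K c =
    ({X 1 ^ c, X 1 * X 3, X 3 ^ c - X 0 * X 1 ^ (c - 1)} : Set (MvPolynomial (Fin 4) K))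
      ∪ {q | ∃ i, i ≤ c - 2 ∧ q = X 1 ^ (c - (i + 1)) * X 2 ^ (3 * i + 1)}
      ∪ {q | ∃ i, i ≤ c - 2 ∧ q = X 2 ^ (3 * i + 1) * X 3 ^ (c - (i + 1))}
      ∪ {X 2 ^ (3 * c - 2)} := by
  have h₂ (i j : Fin 4) (p q : ℕ) :
      monomial (single i p + single j q) (1 : K) = X i ^ p * X j ^ q := by
    rw [X_pow_eq_monomial, X_pow_eq_monomial, monomial_mul, one_mul]
  ext q
  simp only [coneGenerators, coneExponents, curveBinomial, Set.image_union, Set.image_insert_eq,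
    Set.image_singleton, Set.image_image, h₂, ← X_pow_eq_monomial, pow_one]
  simp only [Set.mem_union, Set.mem_insert_iff, Set.mem_singleton_iff, Set.mem_image,
    Set.mem_Iic, Set.mem_ofPred_eq, eq_comm (b := q)]
  aesop

lemma monomial_one_fin_four (a : Fin 4 →₀ ℕ) :
    monomial a (1 : K) = X 0 ^ a 0 * X 1 ^ a 1 * X 2 ^ a 2 * X 3 ^ a 3 := by
  rw [monomial_eq, C_1, one_mul, Finsupp.prod_fintype _ _ fun _ => pow_zero _, Fin.prod_univ_four]

lemma degree_fin_four (a : Fin 4 →₀ ℕ) : a.degree = a 0 + a 1 + a 2 + a 3 := by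
  rw [Finsupp.degree_eq_sum, Fin.sum_univ_four]

lemma le_iff_fin_four {a b : Fin 4 →₀ ℕ} :
    a ≤ b ↔ a 0 ≤ b 0 ∧ a 1 ≤ b 1 ∧ a 2 ≤ b 2 ∧ a 3 ≤ b 3 := by
  simp [Finsupp.le_def, Fin.forall_fin_succ]

lemma cast_weight_curveWeights (hc : 2 ≤ c) (a : Fin 4 →₀ ℕ) :
    (weight (curveWeights c) a : ℤ) = (3 * c ^ 2 - 4 * c + 2) * a 0 + (6 * c ^ 2 + 9 * c + 2) * a 1
      + (4 * c ^ 2 + 5 * c - 3) * a 2 + (6 * c ^ 2 + 6 * c - 11) * a 3 := by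
  have h₀ : 4 * c ≤ 3 * c ^ 2 := by nlinarith
  have h₂ : 3 ≤ 4 * c ^ 2 + 5 * c := by nlinarith
  have h₃ : 11 ≤ 6 * c ^ 2 + 6 * c := by nlinarith
  simp only [Finsupp.weight_eq_sum, Fin.sum_univ_four, curveWeights, smul_eq_mul]
  simp [Nat.cast_sub, h₀, h₂, h₃]
  ring

lemma isCoprime_curveWeights (h227 : ¬ 227 ∣ c + 80) :
    IsCoprime (3 * c ^ 2 - 4 * c + 2 : ℤ) (6 * c ^ 2 + 6 * c - 11) := by
  set N₀ : ℤ := 3 * c ^ 2 - 4 * c + 2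
  set N₃ : ℤ := 6 * c ^ 2 + 6 * c - 11
  rw [Int.isCoprime_iff_gcd_eq_one]
  have hg : (Int.gcd N₀ N₃ : ℤ) ∣ 227 := by
    have : (84 * c + 174) * N₀ - (42 * c - 11) * N₃ = 227 := by ring
    exact this ▸ dvd_sub ((Int.gcd_dvd_left _ _).mul_left _) ((Int.gcd_dvd_right _ _).mul_left _)
  rcases (by norm_num : Nat.Prime 227).eq_one_or_self_of_dvd _
    (Int.natCast_dvd_natCast.1 hg) with h | h
  · exact h
  · have h₀ : (227 : ℤ) ∣ N₀ := by exact_mod_cast h ▸ Int.gcd_dvd_left N₀ N₃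
    have h₃ : (227 : ℤ) ∣ N₃ := by exact_mod_cast h ▸ Int.gcd_dvd_right N₀ N₃
    have : (227 : ℤ) ∣ 14 * (c + 80) := by
      have : 14 * ((c : ℤ) + 80) = N₃ - 2 * N₀ + 5 * 227 := by ring
      exact this ▸ dvd_add (dvd_sub h₃ (h₀.mul_left 2)) (dvd_mul_left _ _)
    exact absurd (by omega) h227

/-- `(α, β, γ)` are the coordinates with respect to the exponent differences of the binomials
`x₄^c - x₁ x₂^(c-1)`, `x₂ x₄ - x₃³` and `x₁^(2c+4) - x₃ x₄^(c-1)` of `I(C)`. -/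
lemma exists_coords_of_weight_eq_zero (h227 : ¬ 227 ∣ c + 80) {z₀ z₁ z₂ z₃ : ℤ}
    (hz : (3 * c ^ 2 - 4 * c + 2) * z₀ + (6 * c ^ 2 + 9 * c + 2) * z₁
      + (4 * c ^ 2 + 5 * c - 3) * z₂ + (6 * c ^ 2 + 6 * c - 11) * z₃ = 0) :
    ∃ α β γ : ℤ, z₀ = α + (2 * c + 4) * γ ∧ z₁ = (c - 1) * α + β ∧ z₂ = -3 * β - γ ∧
      z₃ = -c * α + β - (c - 1) * γ := by
  obtain ⟨α, hα⟩ : (3 * c ^ 2 - 4 * c + 2 : ℤ) ∣ (3 * c - 2) * z₁ + (c - 1) * z₂ - z₃ :=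
    (isCoprime_curveWeights h227).dvd_of_dvd_mul_left
      ⟨z₀ + (6 * c + 12) * z₁ + (2 * c + 4) * z₂, by linear_combination -hz⟩
  refine ⟨α, z₁ - (c - 1) * α, -z₂ - 3 * (z₁ - (c - 1) * α), ?_, by ring, by ring,
    by linear_combination -hα⟩
  have hN : (3 * c ^ 2 - 4 * c + 2 : ℤ) ≠ 0 := by nlinarith [sq_nonneg (3 * (c : ℤ) - 2)]
  refine mul_left_cancel₀ hN ?_
  linear_combination hz + (6 * c ^ 2 + 6 * c - 11 : ℤ) * hα

-- Below, `a₁ + (C - 1) α + β` and `a₃ - C α + β - (C - 1) γ` are the exponents of `x₂` and `x₄`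
-- in `x^b`, where `b - a` has coordinates `(α, β, γ)` and `C = c`.
lemma false_of_one_le_gamma {C a₁ a₃ α β γ k : ℤ} (hC : 1 ≤ C) (hγ : 1 ≤ γ) (hβ : β ≤ k)
    (ha₁ : a₁ + k + 2 ≤ C) (ha₃ : a₃ + k + 2 ≤ C) (hb₁ : 0 ≤ a₁ + (C - 1) * α + β)
    (hb₃ : 0 ≤ a₃ - C * α + β - (C - 1) * γ) : False := by
  have hα : α ≤ -1 := by nlinarith
  nlinarith

lemma false_of_beta_le_neg_one {C a₁ a₃ α β γ : ℤ} (hC : 2 ≤ C) (hβ : β ≤ -1) (hγ : 0 ≤ γ)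
    (ha₁ : a₁ ≤ C - 1) (ha₃ : a₃ ≤ C) (h : a₁ = 0 ∨ a₃ = 0) (hb₁ : 0 ≤ a₁ + (C - 1) * α + β)
    (hb₃ : 0 ≤ a₃ - C * α + β - (C - 1) * γ) : False := by
  rcases h with rfl | rfl
  · have hα : 1 ≤ α := by nlinarith
    nlinarith
  · have hα : α ≤ -1 := by nlinarith
    nlinarith

lemma gamma_nonneg {C a₁ a₃ α β γ : ℤ} (hC : 2 ≤ C) (hdeg : β ≤ (C + 4) * γ)
    (ha₁ : a₁ ≤ C - 1) (ha₃ : a₃ ≤ C) (hb₁ : 0 ≤ a₁ + (C - 1) * α + β)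
    (hb₃ : 0 ≤ a₃ - C * α + β - (C - 1) * γ) : 0 ≤ γ := by
  by_contra! hγ
  have hα : 1 ≤ α := by nlinarith
  nlinarith

/-- A numerical consequence of `x^a` being a multiple of no monomial of `S` and not of the form
`x₁^k x₄^l` with `l > c` (see `mem_span_coneGenerators_or_isStandard`). -/
def IsStandard (c : ℕ) (a : Fin 4 →₀ ℕ) : Prop :=
  a 1 < c ∧ (a 1 = 0 ∨ a 3 = 0) ∧ a 2 + 3 ≤ 3 * c ∧ a 3 ≤ c ∧
    ∀ i ≤ c - 2, 3 * i + 1 ≤ a 2 → a 1 + i + 2 ≤ c ∧ a 3 + i + 2 ≤ c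

lemma IsStandard.beta_eq_zero_and_gamma_eq_zero (hc : 2 ≤ c) {a : Fin 4 →₀ ℕ}
    (ha : IsStandard c a) {α β γ : ℤ} (hb₁ : 0 ≤ (a 1 : ℤ) + (c - 1) * α + β)
    (hb₂ : 0 ≤ (a 2 : ℤ) - 3 * β - γ) (hb₃ : 0 ≤ (a 3 : ℤ) - c * α + β - (c - 1) * γ)
    (hdeg : β ≤ (c + 4) * γ) : β = 0 ∧ γ = 0 := by
  obtain ⟨h₁, h₁₃, h₂, h₃, hi⟩ := ha
  have hC : (2 : ℤ) ≤ c := by exact_mod_cast hc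
  have h₁₃' : (a 1 : ℤ) = 0 ∨ (a 3 : ℤ) = 0 := by omega
  have hγ₀ := gamma_nonneg hC hdeg (by omega) (by omega) hb₁ hb₃
  obtain rfl : γ = 0 := by
    by_contra hne
    have hγ₁ : 1 ≤ γ := by omega
    rcases lt_or_ge 0 β with hβ | hβ
    · obtain ⟨h₁', h₃'⟩ := hi β.toNat (by omega) (by omega)
      exact false_of_one_le_gamma (k := β) (by omega) hγ₁ le_rfl (by omega) (by omega) hb₁ hb₃
    · rcases Nat.eq_zero_or_pos (a 2) with ha₂ | ha₂
      · exact false_of_beta_le_neg_one hC (by omega) hγ₀ (by omega) (by omega) h₁₃' hb₁ hb₃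
      · obtain ⟨h₁', h₃'⟩ := hi 0 (by omega) (by omega)
        exact false_of_one_le_gamma (k := 0) (by omega) hγ₁ hβ (by omega) (by omega) hb₁ hb₃
  refine ⟨le_antisymm (by simpa using hdeg) (not_lt.1 fun hβ => ?_), rfl⟩
  exact false_of_beta_le_neg_one hC (by omega) le_rfl (by omega) (by omega) h₁₃' hb₁ hb₃

lemma IsStandard.alpha_eq_one_or_neg_one (hc : 2 ≤ c) {a : Fin 4 →₀ ℕ} (ha : IsStandard c a)
    {α : ℤ} (hα : α ≠ 0) (hb₁ : 0 ≤ (a 1 : ℤ) + (c - 1) * α) (hb₃ : 0 ≤ (a 3 : ℤ) - c * α) :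
    (α = 1 ∧ a 1 = 0 ∧ a 2 = 0 ∧ a 3 = c) ∨ (α = -1 ∧ a 1 = c - 1 ∧ a 2 = 0 ∧ a 3 = 0) := by
  obtain ⟨h₁, h₁₃, -, h₃, hi⟩ := ha
  have hsmall : 1 ≤ a 2 → a 1 + 2 ≤ c ∧ a 3 + 2 ≤ c := fun h => by
    simpa using hi 0 (Nat.zero_le _) h
  rcases lt_or_gt_of_ne hα with hα | hα
  · have : α = -1 := by nlinarith
    subst this
    right
    omega
  · have : α = 1 := by nlinarith
    subst this
    left
    omega

lemma IsStandard.degree_eq_and_sub_mem_span (hc : 2 ≤ c) (h227 : ¬ 227 ∣ c + 80)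
    {a b : Fin 4 →₀ ℕ} (ha : IsStandard c a)
    (hw : weight (curveWeights c) a = weight (curveWeights c) b) (hd : a.degree ≤ b.degree)
    (hab : a ≠ b) :
    a.degree = b.degree ∧ monomial a (1 : K) - monomial b 1 ∈ Ideal.span {curveBinomial K c} := by
  have hz := congrArg (fun m : ℕ => (m : ℤ)) hw
  simp only [cast_weight_curveWeights hc] at hz
  obtain ⟨α, β, γ, h₀, h₁, h₂, h₃⟩ := exists_coords_of_weight_eq_zero h227
    (z₀ := b 0 - a 0) (z₁ := b 1 - a 1) (z₂ := b 2 - a 2) (z₃ := b 3 - a 3)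
    (by linear_combination hz.symm)
  rw [degree_fin_four, degree_fin_four] at hd ⊢
  have hd' : ((a 0 + a 1 + a 2 + a 3 : ℕ) : ℤ) ≤ (b 0 + b 1 + b 2 + b 3 : ℕ) := by exact_mod_cast hd
  push_cast at hd'
  obtain ⟨rfl, rfl⟩ := ha.beta_eq_zero_and_gamma_eq_zero hc (α := α) (β := β) (γ := γ)
    (by omega) (by omega)
    (by linarith [Nat.cast_nonneg (α := ℤ) (b 3)]) (by linarith)
  have hα : α ≠ 0 := by
    rintro rfl
    exact hab (Finsupp.ext fun j => by fin_cases j <;> simp at h₀ h₁ h₂ h₃ ⊢ <;> omega)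
  simp only [mul_zero, add_zero, sub_zero] at h₀ h₁ h₂ h₃
  rcases ha.alpha_eq_one_or_neg_one hc hα (by omega)
      (by linarith [Nat.cast_nonneg (α := ℤ) (b 3)]) with
    ⟨rfl, ha₁, ha₂, ha₃⟩ | ⟨rfl, ha₁, ha₂, ha₃⟩
  · refine ⟨by omega, Ideal.mem_span_singleton'.2 ⟨X 0 ^ a 0, ?_⟩⟩
    rw [monomial_one_fin_four, monomial_one_fin_four, curveBinomial,
      show b 0 = a 0 + 1 by omega, show b 1 = c - 1 by omega, show b 2 = 0 by omega,
      show b 3 = 0 by omega, ha₁, ha₂, ha₃]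
    ring
  · refine ⟨by omega, Ideal.mem_span_singleton'.2 ⟨-X 0 ^ b 0, ?_⟩⟩
    rw [monomial_one_fin_four, monomial_one_fin_four, curveBinomial,
      show a 0 = b 0 + 1 by omega, show b 1 = 0 by omega, show b 2 = 0 by omega,
      show b 3 = c by omega, ha₁, ha₂, ha₃]
    ring

lemma monomial_mem_span_coneGenerators_of_le {m a : Fin 4 →₀ ℕ} (hm : m ∈ coneExponents c)
    (h : m ≤ a) : monomial a (1 : K) ∈ Ideal.span (coneGenerators K c) :=
  Ideal.span_mono (Set.subset_insert _ _) <| mem_ideal_span_monomial_image.2 fun _ hu =>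
    ⟨m, hm, Finset.mem_singleton.1 (support_monomial_subset hu) ▸ h⟩

lemma monomial_mem_span_coneGenerators_of_lt_apply_three (hc : 2 ≤ c) {a : Fin 4 →₀ ℕ}
    (h₁ : a 1 = 0) (h₂ : a 2 = 0) (h₃ : c < a 3) :
    monomial a (1 : K) ∈ Ideal.span (coneGenerators K c) := by
  have hB : X 1 * X 3 ∈ Ideal.span (coneGenerators K c) := by
    rw [X, X, monomial_mul, one_mul]
    exact monomial_mem_span_coneGenerators_of_le (by simp [coneExponents]) le_rfl
  have hg : curveBinomial K c ∈ Ideal.span (coneGenerators K c) :=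
    Ideal.subset_span (Set.mem_insert _ _)
  obtain ⟨d, rfl⟩ : ∃ d, c = d + 2 := ⟨c - 2, by omega⟩
  obtain ⟨l, hl⟩ : ∃ l, a 3 = d + 3 + l := ⟨a 3 - (d + 3), by omega⟩
  have : monomial a (1 : K) = X 0 ^ a 0 * X 3 ^ (l + 1) * curveBinomial K (d + 2)
      + X 0 ^ (a 0 + 1) * X 1 ^ d * X 3 ^ l * (X 1 * X 3) := by
    rw [monomial_one_fin_four, curveBinomial, h₁, h₂, hl, show d + 2 - 1 = d + 1 by omega]
    ring
  rw [this]
  exact add_mem (Ideal.mul_mem_left _ _ hg) (Ideal.mul_mem_left _ _ hB)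

lemma mem_span_coneGenerators_or_isStandard (hc : 2 ≤ c) (a : Fin 4 →₀ ℕ) :
    monomial a (1 : K) ∈ Ideal.span (coneGenerators K c) ∨ IsStandard c a := by
  by_cases hM : ∃ m ∈ coneExponents c, m ≤ a
  · obtain ⟨m, hm, hle⟩ := hM
    exact Or.inl (monomial_mem_span_coneGenerators_of_le hm hle)
  by_cases htail : a 1 = 0 ∧ a 2 = 0 ∧ c < a 3
  · obtain ⟨h₁, h₂, h₃⟩ := htail
    exact Or.inl (monomial_mem_span_coneGenerators_of_lt_apply_three hc h₁ h₂ h₃)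
  right
  have hM' : ∀ m ∈ coneExponents c, ¬ m ≤ a := fun m hm h => hM ⟨m, hm, h⟩
  have hP (i : ℕ) (hi : i ≤ c - 2) := hM' _ (Or.inl (Or.inr ⟨i, hi, rfl⟩))
  have hQ (i : ℕ) (hi : i ≤ c - 2) := hM' _ (Or.inr ⟨i, hi, rfl⟩)
  have hA := hM' (single 1 c) (Or.inl (Or.inl (Or.inl rfl)))
  have hB := hM' (single 1 1 + single 3 1) (Or.inl (Or.inl (Or.inr (Or.inl rfl))))
  have hC := hM' (single 2 (3 * c - 2)) (Or.inl (Or.inl (Or.inr (Or.inr rfl))))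
  have hQ₀ := hQ 0 (Nat.zero_le _)
  simp [le_iff_fin_four] at hA hB hC hQ₀
  refine ⟨by omega, by omega, by omega, by omega, fun i hi h₂ => ?_⟩
  have hPi := hP i hi
  have hQi := hQ i hi
  simp [le_iff_fin_four] at hPi hQi
  omega

lemma monomial_mem_span_coneGenerators_of_degree_lt (hc : 2 ≤ c) (h227 : ¬ 227 ∣ c + 80)
    {a b : Fin 4 →₀ ℕ} (hw : weight (curveWeights c) a = weight (curveWeights c) b)
    (hd : a.degree < b.degree) : monomial a (1 : K) ∈ Ideal.span (coneGenerators K c) :=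
  (mem_span_coneGenerators_or_isStandard hc a).resolve_right fun ha =>
    hd.ne (ha.degree_eq_and_sub_mem_span (K := K) hc h227 hw hd.le (by rintro rfl; simp at hd)).1

lemma monomial_sub_monomial_mem_span_coneGenerators (hc : 2 ≤ c) (h227 : ¬ 227 ∣ c + 80)
    {a b : Fin 4 →₀ ℕ} (hw : weight (curveWeights c) a = weight (curveWeights c) b)
    (hd : a.degree = b.degree) :
    monomial a (1 : K) - monomial b 1 ∈ Ideal.span (coneGenerators K c) := by
  obtain rfl | hab := eq_or_ne a b
  · rw [sub_self]
    exact zero_mem _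
  have hspan : Ideal.span {curveBinomial K c} ≤ Ideal.span (coneGenerators K c) :=
    Ideal.span_mono (Set.singleton_subset_iff.2 (Set.mem_insert _ _))
  rcases mem_span_coneGenerators_or_isStandard (K := K) hc a with ha | ha
  · rcases mem_span_coneGenerators_or_isStandard (K := K) hc b with hb | hb
    · exact sub_mem ha hb
    · rw [← neg_sub]
      exact neg_mem
        (hspan (hb.degree_eq_and_sub_mem_span (K := K) hc h227 hw.symm hd.ge hab.symm).2)
  · exact hspan (ha.degree_eq_and_sub_mem_span hc h227 hw hd.le hab).2

lemma curveBinomial_eq_monomial_sub_monomial (K : Type*) [Field K] (c : ℕ) :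
    curveBinomial K c = monomial (single 3 c) 1 - monomial (single 0 1 + single 1 (c - 1)) 1 := by
  rw [curveBinomial, X_pow_eq_monomial, X_pow_eq_monomial, X, monomial_mul, one_mul]

lemma single_three_ne (c : ℕ) : single (3 : Fin 4) c ≠ single 0 1 + single 1 (c - 1) := fun h => by
  simpa using congrArg (· 0) h

lemma exists_weight_eq_degree_lt (hc : 2 ≤ c) {m : Fin 4 →₀ ℕ} (hm : m ∈ coneExponents c) :
    ∃ b, weight (curveWeights c) m = weight (curveWeights c) b ∧ m.degree < b.degree := by
  have h₁ : 1 ≤ c := by omega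
  have h₂ : 2 ≤ 3 * c := by omega
  rcases hm with ((rfl | rfl | rfl) | ⟨i, (hi : i ≤ c - 2), rfl⟩) | ⟨i, (hi : i ≤ c - 2), rfl⟩ <;> [
    refine ⟨single 0 (2 * c + 3) + single 2 2, ?_, ?_⟩;
    refine ⟨single 2 3, ?_, ?_⟩;
    refine ⟨single 0 (2 * c + 4) + single 1 (c - 1), ?_, ?_⟩;
    refine ⟨single 0 (2 * c + 3) + single 3 (i + 1), ?_, ?_⟩;
    refine ⟨single 0 (2 * c + 4) + single 1 i, ?_, ?_⟩]
  all_goals first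
    | (simp [degree_fin_four] <;> omega)
    | (apply Nat.cast_injective (R := ℤ)
       simp [cast_weight_curveWeights hc, Nat.cast_sub, show i + 1 ≤ c by omega]
       ring)
    | (apply Nat.cast_injective (R := ℤ)
       simp [cast_weight_curveWeights hc, Nat.cast_sub, h₁, h₂]
       ring)

lemma coneGenerators_subset_idealStar (hc : 2 ≤ c) :
    coneGenerators K c ⊆ idealStar (toricIdeal K (curveWeights c)) := by
  rintro _ (rfl | ⟨m, hm, rfl⟩)
  · have hw : weight (curveWeights c) (single 3 c) =
        weight (curveWeights c) (single 0 1 + single 1 (c - 1)) := by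
      apply Nat.cast_injective (R := ℤ)
      simp [cast_weight_curveWeights hc, Nat.cast_sub (show 1 ≤ c by omega)]
      ring
    have hd : (single 3 c : Fin 4 →₀ ℕ).degree =
        (single 0 1 + single 1 (c - 1) : Fin 4 →₀ ℕ).degree := by
      rw [degree_fin_four, degree_fin_four]
      simp
      omega
    refine Ideal.subset_span ⟨curveBinomial K c, ?_, ?_, ?_⟩ <;>
      rw [curveBinomial_eq_monomial_sub_monomial]
    · exact aeval_X_pow_monomial_sub_monomial hw
    · exact sub_ne_zero.2 fun h => single_three_ne c (monomial_left_injective one_ne_zero h)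
    · exact (star_monomial_sub_monomial_of_degree_eq (single_three_ne c) hd).symm
  · obtain ⟨b, hw, hd⟩ := exists_weight_eq_degree_lt hc hm
    exact Ideal.subset_span ⟨_, aeval_X_pow_monomial_sub_monomial hw,
      sub_ne_zero.2 fun h => hd.ne (congrArg _ (monomial_left_injective one_ne_zero h)),
      (star_monomial_sub_monomial_of_degree_lt hd).symm⟩

lemma coneExponents_isAntichain (hc : 2 ≤ c) : IsAntichain (· ≤ ·) (coneExponents c) := by
  rintro m hm m' hm' hne hle
  rcases hm with ((rfl | rfl | rfl) | ⟨i, (hi : i ≤ c - 2), rfl⟩) | ⟨i, (hi : i ≤ c - 2), rfl⟩ <;>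
  rcases hm' with ((rfl | rfl | rfl) | ⟨j, (hj : j ≤ c - 2), rfl⟩) | ⟨j, (hj : j ≤ c - 2), rfl⟩ <;>
  simp [le_iff_fin_four] at hle <;>
  first
    | exact hne rfl
    | omega
    | (obtain rfl : i = j := by omega
       exact hne rfl)

lemma apply_of_mem_coneExponents (hc : 2 ≤ c) {m : Fin 4 →₀ ℕ} (hm : m ∈ coneExponents c) :
    m 0 = 0 ∧ m 3 < c ∧ 0 < m 1 + m 2 := by
  rcases hm with ((rfl | rfl | rfl) | ⟨i, (hi : i ≤ c - 2), rfl⟩) | ⟨i, (hi : i ≤ c - 2), rfl⟩ <;>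
  simp <;> omega

lemma coeff_single_three_curveBinomial : coeff (single 3 c) (curveBinomial K c) = 1 := by
  rw [curveBinomial_eq_monomial_sub_monomial, coeff_sub, coeff_monomial, coeff_monomial,
    if_pos rfl, if_neg (single_three_ne c).symm, sub_zero]

lemma coeff_single_zero_add_curveBinomial :
    coeff (single 0 1 + single 1 (c - 1)) (curveBinomial K c) = -1 := by
  rw [curveBinomial_eq_monomial_sub_monomial, coeff_sub, coeff_monomial, coeff_monomial,
    if_neg (single_three_ne c), if_pos rfl, zero_sub]

lemma curveBinomial_notMem_span_monomials (hc : 2 ≤ c) :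
    curveBinomial K c ∉ Ideal.span ((fun m => monomial m (1 : K)) '' coneExponents c) := by
  intro h
  have hsupp : single 3 c ∈ (curveBinomial K c).support := by
    simp [mem_support_iff, coeff_single_three_curveBinomial]
  obtain ⟨m, hm, hle⟩ := mem_ideal_span_monomial_image.1 h _ hsupp
  have := apply_of_mem_coneExponents hc hm
  simp [le_iff_fin_four] at hle
  omega

lemma monomial_notMem_span_coneGenerators_diff (hc : 2 ≤ c) {m : Fin 4 →₀ ℕ}
    (hm : m ∈ coneExponents c) :
    monomial m (1 : K) ∉ Ideal.span (coneGenerators K c \ {monomial m 1}) := by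
  intro h
  set M := coneExponents c \ {m} ∪ {single 3 c, single 0 1 + single 1 (c - 1)}
  have hsub : coneGenerators K c \ {monomial m 1} ⊆
      Ideal.span ((fun m => monomial m (1 : K)) '' M) := by
    rintro _ ⟨rfl | ⟨m', hm', rfl⟩, hne⟩
    · rw [curveBinomial_eq_monomial_sub_monomial]
      exact sub_mem (Ideal.subset_span ⟨_, Or.inr (Or.inl rfl), rfl⟩)
        (Ideal.subset_span ⟨_, Or.inr (Or.inr rfl), rfl⟩)
    · refine Ideal.subset_span ⟨m', Or.inl ⟨hm', fun h => hne ?_⟩, rfl⟩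
      rw [Set.mem_singleton_iff.1 h]
      rfl
  obtain ⟨m', hm', hle⟩ := mem_ideal_span_monomial_image.1 (Ideal.span_le.2 hsub h) m
    (by simp)
  have hm₀ := apply_of_mem_coneExponents hc hm
  rcases hm' with ⟨hm', hne⟩ | rfl | rfl
  · exact hne ((coneExponents_isAntichain hc).eq hm' hm hle)
  all_goals simp [le_iff_fin_four] at hle; omega

lemma notMem_span_coneGenerators_diff (hc : 2 ≤ c) {q : MvPolynomial (Fin 4) K}
    (hq : q ∈ coneGenerators K c) : q ∉ Ideal.span (coneGenerators K c \ {q}) := by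
  rcases hq with rfl | ⟨m, hm, rfl⟩
  · refine fun h => curveBinomial_notMem_span_monomials hc (Ideal.span_mono ?_ h)
    rintro _ ⟨hq | hq, hne⟩
    exacts [absurd hq hne, hq]
  · exact monomial_notMem_span_coneGenerators_diff hc hm

lemma ncard_coneExponents (hc : 2 ≤ c) : (coneExponents c).ncard = 2 * c + 1 := by
  have hP : Function.Injective fun i => (single 1 (c - (i + 1)) + single 2 (3 * i + 1) :
      Fin 4 →₀ ℕ) := fun i j h => by
    simpa using DFunLike.congr_fun h 2
  have hQ : Function.Injective fun i => (single 2 (3 * i + 1) + single 3 (c - (i + 1)) :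
      Fin 4 →₀ ℕ) := fun i j h => by
    simpa using DFunLike.congr_fun h 2
  have hT : ({single 1 c, single 1 1 + single 3 1, single 2 (3 * c - 2)} :
      Set (Fin 4 →₀ ℕ)).ncard = 3 := by
    refine Set.ncard_eq_three.2 ⟨_, _, _, ?_, ?_, ?_, rfl⟩ <;> intro h <;>
      have := DFunLike.congr_fun h 1 <;> simp at this <;> omega
  rw [coneExponents, Set.ncard_union_eq, Set.ncard_union_eq, hT,
    Set.ncard_image_of_injective _ hP, Set.ncard_image_of_injective _ hQ, Set.ncard_Iic_nat]
  · omega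
  all_goals
    refine Set.disjoint_left.2 fun m h₁ h₂ => ?_
    obtain ⟨j, (hj : j ≤ c - 2), rfl⟩ := h₂
  on_goal 2 => rcases h₁ with (h | h | h) | ⟨i, (hi : i ≤ c - 2), h⟩
  on_goal 1 => rcases h₁ with h | h | h
  all_goals
    have h₁ := DFunLike.congr_fun h 1
    have h₂ := DFunLike.congr_fun h 2
    have h₃ := DFunLike.congr_fun h 3
    simp at h₁ h₂ h₃ <;> omega

lemma ncard_coneGenerators (hc : 2 ≤ c) : (coneGenerators K c).ncard = 2 * c + 2 := by
  have hfin : (coneExponents c).Finite :=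
    Set.finite_of_ncard_ne_zero (by rw [ncard_coneExponents hc]; omega)
  rw [coneGenerators, Set.ncard_insert_of_notMem _ (hfin.image _), Set.ncard_image_of_injective _
    (monomial_left_injective one_ne_zero), ncard_coneExponents hc]
  rintro ⟨m, -, hm⟩
  have h₁ := congrArg (coeff (single 3 c)) hm
  have h₂ := congrArg (coeff (single 0 1 + single 1 (c - 1))) hm
  rw [coeff_single_three_curveBinomial, coeff_monomial] at h₁
  rw [coeff_single_zero_add_curveBinomial, coeff_monomial] at h₂
  split_ifs at h₁ h₂ with e₁ e₂
  · exact single_three_ne c (e₁.symm.trans e₂)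
  all_goals simp at h₁ h₂

end MonomialCurve

open MonomialCurve in
/-- for an integer `c ≥ 2` with `227 ∤ c + 80`, and
`n_1 = 3c² − 4c + 2`, `n_2 = 6c² + 9c + 2`, `n_3 = 4c² + 5c − 3`, `n_4 = 6c² + 6c − 11`,
the ideal `I(C)_*` is minimally generated by
`{x_2^c, x_2 x_4, x_4^c − x_1 x_2^{c−1}}
  ∪ {x_2^{c−(i+1)} x_3^{3i+1} : 0 ≤ i ≤ c−2}
  ∪ {x_3^{3i+1} x_4^{c−(i+1)} : 0 ≤ i ≤ c−2} ∪ {x_3^{3c−2}}`,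
a set of exactly `2c + 2` elements. -/
theorem stmt_14 {K : Type*} [Field K] (c : ℕ) (hc : 2 ≤ c) (h227 : ¬ (227 ∣ c + 80))
    (n : Fin 4 → ℕ)
    (hn : n = ![3 * c ^ 2 - 4 * c + 2, 6 * c ^ 2 + 9 * c + 2,
      4 * c ^ 2 + 5 * c - 3, 6 * c ^ 2 + 6 * c - 11])
    (S : Set (MvPolynomial (Fin 4) K))
    (hS : S = ({X 1 ^ c, X 1 * X 3, X 3 ^ c - X 0 * X 1 ^ (c - 1)} :
        Set (MvPolynomial (Fin 4) K))
      ∪ {q | ∃ i, i ≤ c - 2 ∧ q = X 1 ^ (c - (i + 1)) * X 2 ^ (3 * i + 1)}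
      ∪ {q | ∃ i, i ≤ c - 2 ∧ q = X 2 ^ (3 * i + 1) * X 3 ^ (c - (i + 1))}
      ∪ {X 2 ^ (3 * c - 2)}) :
    idealStar (toricIdeal K n) = Ideal.span S ∧
    (∀ q ∈ S, Ideal.span (S \ {q}) ≠ idealStar (toricIdeal K n)) ∧
    S.ncard = 2 * c + 2 := by
  obtain rfl : n = curveWeights c := hn
  obtain rfl : S = coneGenerators K c := hS.trans (coneGenerators_eq K c).symm
  have hstar : idealStar (toricIdeal K (curveWeights c)) = Ideal.span (coneGenerators K c) :=
    le_antisymm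
      (idealStar_ker_aeval_X_pow_le
        (fun _ _ => monomial_mem_span_coneGenerators_of_degree_lt hc h227)
        (fun _ _ => monomial_sub_monomial_mem_span_coneGenerators hc h227))
      (Ideal.span_le.2 (coneGenerators_subset_idealStar hc))
  refine ⟨hstar, fun q hq h => notMem_span_coneGenerators_diff hc hq ?_, ncard_coneGenerators hc⟩
  rw [h, hstar]
  exact Ideal.subset_span hq

end
end
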